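/- arXiv:2405.00782 — 3 statements merged into one kernel-verified Lean document; each statement's English description precedes it below -/
import Mathlib

section
/- Let m ∈ ℕ and a_1,…,a_m distinct points in the open upper half-plane, b_1,…,b_m distinct points in the open lower half-plane, and α, β ∈ ℂ^m solutions of the Vandermonde systems V(a)α = e_1 and V(b)β = e_1 (where V(c)_{jk} = c_k^{j-1} and e_1 = (1,0,…,0)^T). Define K(x) = (1/(2πi)) ∑_{j=1}^{m} (α_j/(x - a_j) - β_j/(x - b_j)). Then ∫_ℝ K(x) dx = 1 and ∫_ℝ K(x) x^j dx = 0 for j = 1,…,m-1, and |K(x)| ≤ C(1+|x|)^{-(m+1)} for some constant C. -/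
/-!
Write `K` as `(2πi)⁻¹ ∑ᵢ wᵢ / (x - pᵢ)` with weights `α, -β` at the poles `a, b`; the
Vandermonde conditions say exactly that the moments `∑ᵢ wᵢ pᵢ^ℓ` vanish for `ℓ < m`.
Since `x^ℓ / (x - p) - p^ℓ / (x - p)` is a polynomial in `x` whose coefficients are powers
`p^k`, `k < ℓ`, vanishing moments give `x^ℓ ∑ᵢ wᵢ / (x - pᵢ) = ∑ᵢ wᵢ pᵢ^ℓ / (x - pᵢ)`.
For `ℓ = m` this is the decay `O(|x|^{-(m+1)})`; for `ℓ ≤ m - 1` it turns `K(x) x^ℓ` into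
another partial-fraction sum whose weights sum to zero. Such a sum has the antiderivative
`∑ᵢ wᵢ log (x - pᵢ)`, and `log (R - p) - log (-R - p) → πi sign (Im p)`, so its integral is
`πi ∑ᵢ wᵢ sign (Im pᵢ)`; for `K(x) x^ℓ` this is `(∑ⱼ αⱼ aⱼ^ℓ + ∑ⱼ βⱼ bⱼ^ℓ) / 2`.
-/

open MeasureTheory

open Complex Filter Finset Topology Real

section PartialFractions

variable {ι : Type*} [Fintype ι]

theorem mul_pow_sum_div_sub {K : Type*} [Field K] (w p : ι → K) {x : K}
    (hx : ∀ j, x - p j ≠ 0) {ℓ : ℕ} (hw : ∀ k < ℓ, ∑ j, w j * p j ^ k = 0) :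
    x ^ ℓ * ∑ j, w j / (x - p j) = ∑ j, w j * p j ^ ℓ / (x - p j) := by
  have hterm : ∀ j, x ^ ℓ * (w j / (x - p j)) =
      w j * p j ^ ℓ / (x - p j) + w j * ∑ k ∈ range ℓ, p j ^ k * x ^ (ℓ - 1 - k) := by
    intro j
    rw [mul_div_assoc', div_add' _ _ _ (hx j), div_left_inj' (hx j)]
    linear_combination w j * geom_sum₂_mul (p j) x ℓ
  have hpoly : ∑ j, w j * ∑ k ∈ range ℓ, p j ^ k * x ^ (ℓ - 1 - k) = 0 := by
    simp_rw [mul_sum]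
    rw [sum_comm]
    refine sum_eq_zero fun k hk => ?_
    simp_rw [← mul_assoc, ← sum_mul, hw k (mem_range.mp hk), zero_mul]
  rw [mul_sum, sum_congr rfl fun j _ => hterm j, sum_add_distrib, hpoly, add_zero]

theorem sum_div_sub_sub_div_sub_eq_sum_elim {K : Type*} [Field K] (α β a b : ι → K) (z : K) :
    ∑ j, (α j / (z - a j) - β j / (z - b j)) = ∑ i, Sum.elim α (-β) i / (z - Sum.elim a b i) := by
  simp [Fintype.sum_sum_type, neg_div, sub_eq_add_neg, sum_add_distrib]

theorem ofReal_sub_ne_zero {p : ℂ} (hp : p.im ≠ 0) (x : ℝ) : (x : ℂ) - p ≠ 0 := by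
  intro h
  apply hp
  simpa using congrArg Complex.im h

theorem continuous_sum_div_ofReal_sub (w p : ι → ℂ) (hp : ∀ j, (p j).im ≠ 0) :
    Continuous fun x : ℝ => ∑ j, w j / ((x : ℂ) - p j) :=
  continuous_finsetSum _ fun j _ =>
    continuous_const.div (continuous_ofReal.sub continuous_const) (ofReal_sub_ne_zero (hp j))

theorem one_add_abs_le_two_mul_norm_sub {p : ℂ} {M : ℝ} (hp : ‖p‖ ≤ M) {x : ℝ}
    (hx : 2 * M + 1 ≤ |x|) : 1 + |x| ≤ 2 * ‖(x : ℂ) - p‖ := by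
  have := norm_sub_norm_le (x : ℂ) p
  rw [Complex.norm_real, Real.norm_eq_abs] at this
  linarith

theorem Continuous.exists_norm_le_div_one_add_abs_pow {E : Type*} [SeminormedAddCommGroup E]
    {f : ℝ → E} (hf : Continuous f) {n : ℕ} {R C : ℝ}
    (h : ∀ x, R ≤ |x| → ‖f x‖ ≤ C / (1 + |x|) ^ n) :
    ∃ C' : ℝ, 0 < C' ∧ ∀ x, ‖f x‖ ≤ C' / (1 + |x|) ^ n := by
  have hg : Continuous fun x => (1 + |x|) ^ n * ‖f x‖ := by fun_prop
  obtain ⟨B, hB⟩ := (isCompact_Icc (a := -R) (b := R)).exists_bound_of_continuousOn hg.continuousOn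
  refine ⟨max (max B C) 1, by positivity, fun x => ?_⟩
  have hpos : 0 < (1 + |x|) ^ n := by positivity
  rw [le_div_iff₀ hpos, mul_comm]
  rcases le_or_gt R |x| with hx | hx
  · have := h x hx
    rw [le_div_iff₀ hpos, mul_comm] at this
    exact this.trans ((le_max_right _ _).trans (le_max_left _ _))
  · have := hB x (abs_le.mp hx.le)
    rw [Real.norm_of_nonneg (by positivity)] at this
    exact this.trans ((le_max_left _ _).trans (le_max_left _ _))

theorem norm_sum_div_sub_le_of_abs_ge (w p : ι → ℂ) {M : ℝ} (hM : 0 ≤ M)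
    (hpM : ∀ j, ‖p j‖ ≤ M) {n : ℕ} (hw : ∀ k < n, ∑ j, w j * p j ^ k = 0) {x : ℝ}
    (hx : 2 * M + 1 ≤ |x|) :
    ‖∑ j, w j / ((x : ℂ) - p j)‖ ≤ 2 ^ (n + 1) * M ^ n * (∑ j, ‖w j‖) / (1 + |x|) ^ (n + 1) := by
  have ht : 0 < 1 + |x| := by positivity
  have hdist : ∀ j, 1 + |x| ≤ 2 * ‖(x : ℂ) - p j‖ := fun j =>
    one_add_abs_le_two_mul_norm_sub (hpM j) hx
  have hx0 : 1 + |x| ≤ 2 * ‖(x : ℂ)‖ := by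
    simpa using one_add_abs_le_two_mul_norm_sub (p := 0) (by simpa using hM) hx
  have hxp : ∀ j, (x : ℂ) - p j ≠ 0 := fun j =>
    norm_pos_iff.mp (by linarith [hdist j])
  have hterm : ∀ j, ‖w j * p j ^ n / ((x : ℂ) - p j)‖ ≤ 2 * M ^ n * ‖w j‖ / (1 + |x|) := by
    intro j
    rw [norm_div, norm_mul, norm_pow, div_le_div_iff₀ (norm_pos_iff.mpr (hxp j)) ht]
    have := pow_le_pow_left₀ (norm_nonneg _) (hpM j) n
    calc ‖w j‖ * ‖p j‖ ^ n * (1 + |x|) ≤ ‖w j‖ * M ^ n * (2 * ‖(x : ℂ) - p j‖) := by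
          gcongr
          exact hdist j
      _ = _ := by ring
  have hshift : ‖(x : ℂ)‖ ^ n * ‖∑ j, w j / ((x : ℂ) - p j)‖ ≤
      2 * M ^ n * (∑ j, ‖w j‖) / (1 + |x|) := by
    rw [← norm_pow, ← norm_mul, mul_pow_sum_div_sub w p hxp hw]
    calc _ ≤ ∑ j, ‖w j * p j ^ n / ((x : ℂ) - p j)‖ := norm_sum_le _ _
      _ ≤ ∑ j, 2 * M ^ n * ‖w j‖ / (1 + |x|) := sum_le_sum fun j _ => hterm j
      _ = _ := by rw [← sum_div, ← mul_sum]
  have hscaled : ((1 + |x|) / 2) ^ n * ‖∑ j, w j / ((x : ℂ) - p j)‖ ≤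
      2 * M ^ n * (∑ j, ‖w j‖) / (1 + |x|) :=
    (mul_le_mul_of_nonneg_right (pow_le_pow_left₀ (by positivity) (by linarith) n)
      (norm_nonneg _)).trans hshift
  rw [div_pow, le_div_iff₀ ht] at hscaled
  rw [le_div_iff₀ (by positivity)]
  calc ‖∑ j, w j / ((x : ℂ) - p j)‖ * (1 + |x|) ^ (n + 1)
      = 2 ^ n * ((1 + |x|) ^ n / 2 ^ n * ‖∑ j, w j / ((x : ℂ) - p j)‖ * (1 + |x|)) := by
        field_simp
        ring
    _ ≤ 2 ^ n * (2 * M ^ n * ∑ j, ‖w j‖) := by gcongr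
    _ = _ := by ring

theorem exists_norm_sum_div_sub_le (w p : ι → ℂ) (hp : ∀ j, (p j).im ≠ 0) {n : ℕ}
    (hw : ∀ k < n, ∑ j, w j * p j ^ k = 0) :
    ∃ C : ℝ, 0 < C ∧ ∀ x : ℝ, ‖∑ j, w j / ((x : ℂ) - p j)‖ ≤ C / (1 + |x|) ^ (n + 1) :=
  (continuous_sum_div_ofReal_sub w p hp).exists_norm_le_div_one_add_abs_pow
    fun _ => norm_sum_div_sub_le_of_abs_ge w p (sum_nonneg fun j _ => norm_nonneg (p j))
      (fun j => single_le_sum (fun j _ => norm_nonneg (p j)) (mem_univ j)) hw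

theorem integrable_sum_div_sub (w p : ι → ℂ) (hp : ∀ j, (p j).im ≠ 0) (hw : ∑ j, w j = 0) :
    Integrable fun x : ℝ => ∑ j, w j / ((x : ℂ) - p j) := by
  obtain ⟨C, hC0, hC⟩ := exists_norm_sum_div_sub_le w p hp (n := 1) fun k hk => by
    obtain rfl : k = 0 := by omega
    simpa using hw
  refine (integrable_inv_one_add_sq.const_mul C).mono'
    (continuous_sum_div_ofReal_sub w p hp).aestronglyMeasurable
    (Eventually.of_forall fun x => (hC x).trans ?_)
  rw [div_eq_mul_inv]
  gcongr
  norm_num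
  nlinarith [abs_nonneg x, sq_abs x]

theorem hasDerivAt_log_ofReal_sub {p : ℂ} (hp : p.im ≠ 0) (x : ℝ) :
    HasDerivAt (fun y : ℝ => log ((y : ℂ) - p)) ((x : ℂ) - p)⁻¹ x := by
  simpa using ((hasDerivAt_id x).ofReal_comp.sub_const p).clog_real
    (mem_slitPlane_iff.mpr (Or.inr (by simpa using hp)))

theorem tendsto_log_neg_one_sub_div {p : ℂ} (hp : p.im ≠ 0) :
    Tendsto (fun R : ℝ => log (-1 - p / R)) atTop (𝓝 (-(π * I * Real.sign p.im))) := by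
  have hlim : Tendsto (fun R : ℝ => -1 - p / R) atTop (𝓝 (-1)) := by
    simpa [div_eq_mul_inv] using
      tendsto_const_nhds.sub (tendsto_inv_atTop_zero.ofReal.const_mul p)
  have him : ∀ R : ℝ, (-1 - p / R).im = -(p.im / R) := fun R => by simp
  -- `-1 - p / R` approaches the branch cut of `log` from the side opposite to `p`.
  rcases hp.lt_or_gt with hneg | hpos
  · have hwithin : Tendsto (fun R : ℝ => -1 - p / R) atTop (𝓝[{z | 0 ≤ z.im}] (-1)) :=
      tendsto_nhdsWithin_iff.mpr ⟨hlim, (eventually_gt_atTop 0).mono fun R hR => by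
        simpa [him] using (div_neg_of_neg_of_pos hneg hR).le⟩
    simpa [Real.sign_of_neg hneg, log_neg_one, Function.comp_def] using
      (continuousWithinAt_log_of_re_neg_of_im_zero (by norm_num) (by simp)).tendsto.comp hwithin
  · have hwithin : Tendsto (fun R : ℝ => -1 - p / R) atTop (𝓝[{z | z.im < 0}] (-1)) :=
      tendsto_nhdsWithin_iff.mpr ⟨hlim, (eventually_gt_atTop 0).mono fun R hR => by
        simpa [him] using div_pos hpos hR⟩
    simpa [Real.sign_of_pos hpos, Function.comp_def] using
      (tendsto_log_nhdsWithin_im_neg_of_re_neg_of_im_zero (by norm_num) (by simp)).comp hwithin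

theorem tendsto_log_sub_sub_log_neg_sub {p : ℂ} (hp : p.im ≠ 0) :
    Tendsto (fun R : ℝ => log (R - p) - log (-R - p)) atTop (𝓝 (π * I * Real.sign p.im)) := by
  have hscale : ∀ R : ℝ, 0 < R →
      log (R - p) - log (-R - p) = log (1 - p / R) - log (-1 - p / R) := by
    intro R hR
    have hR0 : (R : ℂ) ≠ 0 := ofReal_ne_zero.mpr hR.ne'
    have hpos : (R : ℂ) - p = R * (1 - p / R) := by field_simp
    have hneg : -(R : ℂ) - p = R * (-1 - p / R) := by field_simp
    have hneg' : -(R : ℂ) - p ≠ 0 := by simpa using ofReal_sub_ne_zero hp (-R)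
    rw [hpos, hneg, log_ofReal_mul hR (right_ne_zero_of_mul (hpos ▸ ofReal_sub_ne_zero hp R)),
      log_ofReal_mul hR (right_ne_zero_of_mul (hneg ▸ hneg'))]
    ring
  have hone : Tendsto (fun R : ℝ => log (1 - p / R)) atTop (𝓝 0) := by
    have h : Tendsto (fun R : ℝ => 1 - p / R) atTop (𝓝 1) := by
      simpa [div_eq_mul_inv] using
        tendsto_const_nhds.sub (tendsto_inv_atTop_zero.ofReal.const_mul p)
    simpa [Function.comp_def] using (continuousAt_clog (by simp)).tendsto.comp h
  refine Tendsto.congr' ?_ (by simpa using hone.sub (tendsto_log_neg_one_sub_div hp))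
  filter_upwards [eventually_gt_atTop 0] with R hR using (hscale R hR).symm

theorem integral_sum_div_sub (w p : ι → ℂ) (hp : ∀ j, (p j).im ≠ 0) (hw : ∑ j, w j = 0) :
    ∫ x : ℝ, ∑ j, w j / ((x : ℂ) - p j) = π * I * ∑ j, w j * Real.sign (p j).im := by
  have hint := integrable_sum_div_sub w p hp hw
  have hFTC : ∀ R : ℝ, ∫ x in -R..R, ∑ j, w j / ((x : ℂ) - p j) =
      ∑ j, w j * (log (R - p j) - log (-R - p j)) := by
    intro R
    rw [intervalIntegral.integral_eq_sub_of_hasDerivAt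
      (f := fun y : ℝ => ∑ j, w j * log ((y : ℂ) - p j))
      (fun x _ => by simpa [div_eq_mul_inv] using HasDerivAt.fun_sum fun j _ =>
        (hasDerivAt_log_ofReal_sub (hp j) x).const_mul (w j))
      hint.intervalIntegrable]
    simp [← sum_sub_distrib, mul_sub]
  refine tendsto_nhds_unique ((intervalIntegral_tendsto_integral hint
    tendsto_neg_atTop_atBot tendsto_id).congr hFTC) ?_
  rw [mul_sum]
  refine tendsto_finsetSum _ fun j _ => ?_
  simpa [mul_comm, mul_left_comm] using (tendsto_log_sub_sub_log_neg_sub (hp j)).const_mul (w j)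

theorem integral_sum_div_sub_mul_pow (w p : ι → ℂ) (hp : ∀ j, (p j).im ≠ 0) {ℓ : ℕ}
    (hw : ∀ k ≤ ℓ, ∑ j, w j * p j ^ k = 0) :
    ∫ x : ℝ, (∑ j, w j / ((x : ℂ) - p j)) * (x : ℂ) ^ ℓ =
      π * I * ∑ j, w j * p j ^ ℓ * Real.sign (p j).im := by
  have hshift : ∀ x : ℝ, (∑ j, w j / ((x : ℂ) - p j)) * (x : ℂ) ^ ℓ =
      ∑ j, w j * p j ^ ℓ / ((x : ℂ) - p j) := fun x => by
    rw [mul_comm, mul_pow_sum_div_sub w p (fun j => ofReal_sub_ne_zero (hp j) x)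
      fun k hk => hw k hk.le]
  simp_rw [hshift]
  exact integral_sum_div_sub _ p hp (hw ℓ le_rfl)

end PartialFractions

theorem rational_kernel_high_order_general
    (m : ℕ)
    (a b : Fin m → ℂ)
    (haim : ∀ j, 0 < (a j).im) (hbim : ∀ j, (b j).im < 0)
    (α β : Fin m → ℂ)
    (hα1 : ∑ j, α j = 1) (hβ1 : ∑ j, β j = 1)
    (hαv : ∀ ℓ : ℕ, 1 ≤ ℓ → ℓ ≤ m - 1 → ∑ j, α j * a j ^ ℓ = 0)
    (hβv : ∀ ℓ : ℕ, 1 ≤ ℓ → ℓ ≤ m - 1 → ∑ j, β j * b j ^ ℓ = 0) :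
    (∫ x : ℝ, (1 / (2 * (Real.pi : ℂ) * Complex.I)) *
        ∑ j, (α j / ((x : ℂ) - a j) - β j / ((x : ℂ) - b j))) = 1 ∧
    (∀ ℓ : ℕ, 1 ≤ ℓ → ℓ ≤ m - 1 →
      (∫ x : ℝ, ((1 / (2 * (Real.pi : ℂ) * Complex.I)) *
        ∑ j, (α j / ((x : ℂ) - a j) - β j / ((x : ℂ) - b j))) * (x : ℂ) ^ ℓ) = 0) ∧
    ∃ C : ℝ, 0 < C ∧ ∀ x : ℝ,
      ‖(1 / (2 * (Real.pi : ℂ) * Complex.I)) *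
        ∑ j, (α j / ((x : ℂ) - a j) - β j / ((x : ℂ) - b j))‖ ≤
        C / (1 + |x|) ^ (m + 1) := by
  set w := Sum.elim α (-β)
  set p := Sum.elim a b
  have hp : ∀ i, (p i).im ≠ 0 := by
    rintro (j | j)
    exacts [(haim j).ne', (hbim j).ne]
  have hmoment : ∀ ℓ ≤ m - 1, ∑ i, w i * p i ^ ℓ = 0 := by
    intro ℓ hℓ
    rcases Nat.eq_zero_or_pos ℓ with rfl | hℓ0
    · simp [w, p, Fintype.sum_sum_type, hα1, hβ1]
    · simp [w, p, Fintype.sum_sum_type, hαv ℓ hℓ0 hℓ, hβv ℓ hℓ0 hℓ]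
  have hintegral : ∀ ℓ ≤ m - 1, ∫ x : ℝ, ((1 / (2 * (π : ℂ) * I)) *
      ∑ j, (α j / ((x : ℂ) - a j) - β j / ((x : ℂ) - b j))) * (x : ℂ) ^ ℓ =
      (1 / (2 * (π : ℂ) * I)) * (π * I * (∑ j, α j * a j ^ ℓ + ∑ j, β j * b j ^ ℓ)) := by
    intro ℓ hℓ
    simp_rw [sum_div_sub_sub_div_sub_eq_sum_elim, mul_assoc]
    rw [integral_const_mul,
      integral_sum_div_sub_mul_pow w p hp fun k hk => hmoment k (hk.trans hℓ)]
    simp [w, p, Fintype.sum_sum_type, Real.sign_of_pos (haim _), Real.sign_of_neg (hbim _)]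
    ring
  refine ⟨?_, fun ℓ hℓ1 hℓ2 => ?_, ?_⟩
  · have h := hintegral 0 (Nat.zero_le _)
    simp only [pow_zero, mul_one, hα1, hβ1] at h
    rw [h]
    field_simp
    ring
  · rw [hintegral ℓ hℓ2, hαv ℓ hℓ1 hℓ2, hβv ℓ hℓ1 hℓ2]
    simp
  · obtain ⟨C, hC, hbound⟩ :=
      exists_norm_sum_div_sub_le w p hp (n := m) fun k hk => hmoment k (by omega)
    refine ⟨‖(1 / (2 * (π : ℂ) * I))‖ * C, by simp [hC], fun x => ?_⟩
    rw [sum_div_sub_sub_div_sub_eq_sum_elim, norm_mul, mul_div_assoc]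
    gcongr
    exact hbound x

/-- The rational kernel `K(x) = (1/(2πi)) ∑_j (α_j/(x-a_j) - β_j/(x-b_j))`,
with poles `a_j` in the upper half-plane and `b_j` in the lower half-plane and
residues solving the Vandermonde systems (`∑α_j = ∑β_j = 1`,
`∑α_j a_j^ℓ = ∑β_j b_j^ℓ = 0` for `1 ≤ ℓ ≤ m-1`), is an `m`-th order kernel on
`ℝ`: it is normalized, has vanishing moments up to order `m-1`, and decays like
`(1+|x|)^{-(m+1)}`. -/
theorem rational_kernel_high_order
    (m : ℕ) (hm : 1 ≤ m)
    (a b : Fin m → ℂ) (ha : Function.Injective a) (hb : Function.Injective b)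
    (haim : ∀ j, 0 < (a j).im) (hbim : ∀ j, (b j).im < 0)
    (α β : Fin m → ℂ)
    (hα1 : ∑ j, α j = 1) (hβ1 : ∑ j, β j = 1)
    (hαv : ∀ ℓ : ℕ, 1 ≤ ℓ → ℓ ≤ m - 1 → ∑ j, α j * a j ^ ℓ = 0)
    (hβv : ∀ ℓ : ℕ, 1 ≤ ℓ → ℓ ≤ m - 1 → ∑ j, β j * b j ^ ℓ = 0) :
    (∫ x : ℝ, (1 / (2 * (Real.pi : ℂ) * Complex.I)) *
        ∑ j, (α j / ((x : ℂ) - a j) - β j / ((x : ℂ) - b j))) = 1 ∧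
    (∀ ℓ : ℕ, 1 ≤ ℓ → ℓ ≤ m - 1 →
      (∫ x : ℝ, ((1 / (2 * (Real.pi : ℂ) * Complex.I)) *
        ∑ j, (α j / ((x : ℂ) - a j) - β j / ((x : ℂ) - b j))) * (x : ℂ) ^ ℓ) = 0) ∧
    ∃ C : ℝ, 0 < C ∧ ∀ x : ℝ,
      ‖(1 / (2 * (Real.pi : ℂ) * Complex.I)) *
        ∑ j, (α j / ((x : ℂ) - a j) - β j / ((x : ℂ) - b j))‖ ≤
        C / (1 + |x|) ^ (m + 1) :=
  rational_kernel_high_order_general m a b haim hbim α β hα1 hβ1 hαv hβv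
end

section
/- Let A be a unitary operator on ℓ²(ℕ) whose matrix with respect to the canonical basis is banded below in the sense that A_{jk} = 0 whenever j > f(k) for an increasing function f : ℕ → ℕ with f(n) ≥ n. Let τ, τ' : ℕ → ℝ_{>0} be weight functions with ∑_{j=1}^{f(k)} τ(j) ≤ τ'(k) for all k. Then for every u ∈ ℓ²_{τ'}(ℕ), Au ∈ ℓ²_τ(ℕ) with ‖Au‖_τ ≤ ‖u‖_{τ'}. -/
/-!
Row `j` of `A` is the vector `A† e_j`: its norm is at most `‖A‖ ≤ 1`, and the band condition
makes it vanish outside `{k | j ≤ f k}`. Cauchy–Schwarz therefore gives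
`|(Au)_j|² ≤ ∑_{k : j ≤ f k} |u_k|²`. Weighting by `τ j`, summing over `j` and exchanging the
order of summation bounds `∑_j |(Au)_j|² τ j` by `∑_k |u_k|² ∑_{j ≤ f k} τ j ≤ ∑_k |u_k|² τ' k`.
-/

open scoped ENNReal InnerProductSpace

namespace lp

section NormSq

variable {ι : Type*} {E : ι → Type*} [∀ i, NormedAddCommGroup (E i)]

theorem norm_sq_eq_tsum (u : lp E 2) : ‖u‖ ^ 2 = ∑' i, ‖u i‖ ^ 2 := by
  exact_mod_cast lp.norm_rpow_eq_tsum (by norm_num) u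

theorem summable_norm_sq (u : lp E 2) : Summable fun i => ‖u i‖ ^ 2 := by
  exact_mod_cast (lp.memℓp u).summable (by norm_num)

end NormSq

section Indicator

variable {ι E : Type*} [NormedAddCommGroup E] {p : ℝ≥0∞}

noncomputable def indicator (s : Set ι) (u : lp (fun _ : ι => E) p) : lp (fun _ : ι => E) p :=
  ⟨s.indicator u, (lp.memℓp u).mono' fun i => norm_indicator_le_norm_self u i⟩

@[simp]
theorem coeFn_indicator (s : Set ι) (u : lp (fun _ : ι => E) p) :
    ⇑(indicator s u) = s.indicator u :=
  rfl

theorem norm_indicator_sq (s : Set ι) (u : lp (fun _ : ι => E) 2) :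
    ‖indicator s u‖ ^ 2 = ∑' i, s.indicator (fun i => ‖u i‖ ^ 2) i := by
  rw [norm_sq_eq_tsum]
  congr 1 with i
  by_cases hi : i ∈ s <;> simp [hi]

theorem inner_indicator_of_forall_notMem {𝕜 : Type*} [RCLike 𝕜] [InnerProductSpace 𝕜 E]
    {s : Set ι} {v : lp (fun _ : ι => E) 2} (hv : ∀ i ∉ s, v i = 0) (u : lp (fun _ : ι => E) 2) :
    ⟪v, indicator s u⟫_𝕜 = ⟪v, u⟫_𝕜 := by
  simp only [inner_eq_tsum, coeFn_indicator]
  congr 1 with i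
  by_cases hi : i ∈ s <;> simp [hi, hv]

end Indicator

section Band

variable {ι 𝕜 : Type*} [RCLike 𝕜] [DecidableEq ι]

theorem apply_eq_inner_single (u : lp (fun _ : ι => 𝕜) 2) (i : ι) :
    u i = ⟪lp.single 2 i 1, u⟫_𝕜 := by
  simp [inner_single_left]

theorem norm_apply_le_opNorm_mul_norm_indicator
    (A : lp (fun _ : ι => 𝕜) 2 →L[𝕜] lp (fun _ : ι => 𝕜) 2) {j : ι} {s : Set ι}
    (hband : ∀ k ∉ s, A (lp.single 2 k 1) j = 0) (u : lp (fun _ : ι => 𝕜) 2) :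
    ‖A u j‖ ≤ ‖A‖ * ‖indicator s u‖ := by
  set row := ContinuousLinearMap.adjoint A (lp.single 2 j 1)
  have hrow : ∀ k ∉ s, row k = 0 := fun k hk => by
    rw [apply_eq_inner_single, ContinuousLinearMap.adjoint_inner_right, inner_single_right,
      hband k hk, inner_zero_left]
  have hnorm : ‖row‖ ≤ ‖A‖ := by
    simpa [lp.norm_single] using
      (ContinuousLinearMap.adjoint A).le_opNorm (lp.single 2 j (1 : 𝕜))
  calc ‖A u j‖ = ‖⟪row, indicator s u⟫_𝕜‖ := by
        rw [inner_indicator_of_forall_notMem hrow, ContinuousLinearMap.adjoint_inner_left,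
          ← apply_eq_inner_single]
    _ ≤ ‖row‖ * ‖indicator s u‖ := norm_inner_le_norm _ _
    _ ≤ ‖A‖ * ‖indicator s u‖ := by gcongr

end Band

end lp

section WeightedSum

open Finset

theorem sum_range_indicator_le {τ : ℕ → ℝ} (hτ : ∀ j, 0 ≤ τ j) (n m : ℕ) :
    ∑ j ∈ range n, {j | j ≤ m}.indicator τ j ≤ ∑ j ∈ range (m + 1), τ j := by
  simp only [Set.indicator_apply, Set.mem_ofPred_eq]
  rw [← sum_filter]
  refine sum_le_sum_of_subset_of_nonneg (fun j hj => ?_) fun j _ _ => hτ j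
  simp only [mem_filter, mem_range] at hj ⊢
  omega

theorem summable_and_tsum_mul_le_of_le_tsum_indicator {a g τ τ' : ℕ → ℝ} {f : ℕ → ℕ}
    (ha : ∀ k, 0 ≤ a k) (ha_sum : Summable a) (hg : ∀ j, 0 ≤ g j)
    (hga : ∀ j, g j ≤ ∑' k, {k | j ≤ f k}.indicator a k)
    (hτ : ∀ j, 0 ≤ τ j) (hwt : ∀ k, ∑ j ∈ range (f k + 1), τ j ≤ τ' k)
    (haτ' : Summable fun k => a k * τ' k) :
    Summable (fun j => g j * τ j) ∧ ∑' j, g j * τ j ≤ ∑' k, a k * τ' k := by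
  have hgτ : ∀ j, 0 ≤ g j * τ j := fun j => mul_nonneg (hg j) (hτ j)
  have hpartial : ∀ n, ∑ j ∈ range n, g j * τ j ≤ ∑' k, a k * τ' k := fun n => by
    have hsum : ∀ j, Summable fun k => {k | j ≤ f k}.indicator a k * τ j := fun j =>
      (ha_sum.indicator _).mul_right _
    have hswap : ∀ k, ∑ j ∈ range n, {k | j ≤ f k}.indicator a k * τ j =
        a k * ∑ j ∈ range n, {j | j ≤ f k}.indicator τ j := fun k => by
      rw [mul_sum]
      refine sum_congr rfl fun j _ => ?_
      by_cases h : j ≤ f k <;> simp [h]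
    calc ∑ j ∈ range n, g j * τ j
        ≤ ∑ j ∈ range n, ∑' k, {k | j ≤ f k}.indicator a k * τ j :=
          sum_le_sum fun j _ => by
            rw [tsum_mul_right]
            exact mul_le_mul_of_nonneg_right (hga j) (hτ j)
      _ = ∑' k, a k * ∑ j ∈ range n, {j | j ≤ f k}.indicator τ j := by
          rw [← Summable.tsum_finsetSum fun j _ => hsum j]
          exact tsum_congr hswap
      _ ≤ ∑' k, a k * τ' k :=
          ((summable_sum fun j _ => hsum j).congr hswap).tsum_le_tsum
            (fun k => mul_le_mul_of_nonneg_left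
              ((sum_range_indicator_le hτ n (f k)).trans (hwt k)) (ha k)) haτ'
  exact ⟨summable_of_sum_range_le hgτ hpartial, Real.tsum_le_of_sum_range_le hgτ hpartial⟩

end WeightedSum

theorem banded_unitary_weighted_bound_general
    (A : lp (fun _ : ℕ => ℂ) 2 →L[ℂ] lp (fun _ : ℕ => ℂ) 2)
    (hA : A ∈ unitary (lp (fun _ : ℕ => ℂ) 2 →L[ℂ] lp (fun _ : ℕ => ℂ) 2))
    (f : ℕ → ℕ)
    (hband : ∀ j k : ℕ, f k < j → (A (lp.single 2 k 1)) j = 0)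
    (τ τ' : ℕ → ℝ) (hτ : ∀ j, 0 < τ j)
    (hwt : ∀ k, ∑ j ∈ Finset.range (f k + 1), τ j ≤ τ' k)
    (u : lp (fun _ : ℕ => ℂ) 2)
    (hu : Summable (fun j => ‖u j‖ ^ 2 * τ' j)) :
    Summable (fun j => ‖(A u) j‖ ^ 2 * τ j) ∧
      ∑' j, ‖(A u) j‖ ^ 2 * τ j ≤ ∑' j, ‖u j‖ ^ 2 * τ' j := by
  have hA_norm : ‖A‖ ≤ 1 := A.opNorm_le_bound zero_le_one fun x => by
    rw [ContinuousLinearMap.norm_map_of_mem_unitary hA, one_mul]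
  have hrow (j : ℕ) :
      ‖A u j‖ ^ 2 ≤ ∑' k, {k | j ≤ f k}.indicator (fun k => ‖u k‖ ^ 2) k := by
    rw [← lp.norm_indicator_sq]
    gcongr
    calc ‖A u j‖ ≤ ‖A‖ * _ :=
          lp.norm_apply_le_opNorm_mul_norm_indicator A (fun k hk => hband j k (not_le.mp hk)) u
      _ ≤ _ := mul_le_of_le_one_left (norm_nonneg _) hA_norm
  exact summable_and_tsum_mul_le_of_le_tsum_indicator (fun _ => by positivity)
    (lp.summable_norm_sq u) (fun _ => by positivity) hrow (fun j => (hτ j).le) hwt hu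

/-- Weighted bound for a banded unitary operator: if `A` is unitary on `ℓ²(ℕ)` with
matrix entries `A_{jk} = 0` for `j > f(k)` (with `f` increasing and `f(n) ≥ n`), and
the weights satisfy `∑_{j=0}^{f(k)} τ(j) ≤ τ'(k)`, then `‖Au‖_τ ≤ ‖u‖_{τ'}` for every
`u ∈ ℓ²_{τ'}(ℕ)`. -/
theorem banded_unitary_weighted_bound
    (A : lp (fun _ : ℕ => ℂ) 2 →L[ℂ] lp (fun _ : ℕ => ℂ) 2)
    (hA : A ∈ unitary (lp (fun _ : ℕ => ℂ) 2 →L[ℂ] lp (fun _ : ℕ => ℂ) 2))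
    (f : ℕ → ℕ) (hf : Monotone f) (hfn : ∀ n, n ≤ f n)
    (hband : ∀ j k : ℕ, f k < j → (A (lp.single 2 k 1)) j = 0)
    (τ τ' : ℕ → ℝ) (hτ : ∀ j, 0 < τ j) (hτ' : ∀ j, 0 < τ' j)
    (hwt : ∀ k, ∑ j ∈ Finset.range (f k + 1), τ j ≤ τ' k)
    (u : lp (fun _ : ℕ => ℂ) 2)
    (hu : Summable (fun j => ‖u j‖ ^ 2 * τ' j)) :
    Summable (fun j => ‖(A u) j‖ ^ 2 * τ j) ∧
      ∑' j, ‖(A u) j‖ ^ 2 * τ j ≤ ∑' j, ‖u j‖ ^ 2 * τ' j :=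
  banded_unitary_weighted_bound_general A hA f hband τ τ' hτ hwt u hu
end

section
/- Let U be a unitary operator on a Hilbert space H with spectral measure E on the unit circle (angle parametrization on [-π,π]_per), and let {K_ε^𝕋} be an m-th order kernel. For any g ∈ H with ‖g‖=1 and any φ ∈ C^{n,α}([-π,π]_per) with n + α < m, |∫ φ(θ) dξ_g(θ) - ∫ φ(θ)[K_ε^𝕋 ∗ ξ_g](θ) dθ| ≤ C ‖φ‖_{C^{n,α}} ε^{n+α}, where ξ_g(S) = ⟨E(exp(iS))g, g⟩ and C depends only on the kernel constants, m, n, α. -/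
/-!
Fubini reduces the estimate to a bound on `φ x - ∫ φ (x + u) K_ε u du`, uniform in `x`.
Only the coefficients `∫ K_ε u e^{-iju} du`, `j ≥ 1`, are controlled, so `φ (x + ·)` is
approximated by a one-sided trigonometric polynomial `T u = ∑_{j ≤ n} c_j e^{-iju}` with the
same `n`-jet at `0`: the `c_j` solve a Vandermonde system in the nodes `-ij`, and Taylor's
theorem with Hölder remainder gives `‖φ (x + u) - T u‖ ≲ |u|^{n+α}`. The part
`∫ (φ x - T) K_ε = ∑ c_j (1 - K̂_ε j)` is then small by flatness (the logarithm is absorbed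
into `ε^{-δ}`, `δ = m - n - α`), and the part `∫ (T - φ (x + ·)) K_ε` by concentration, since
`∫ |u|^{n+α} ε^m (ε + |u|)^{-m-1} du ≲ ε^{n+α}`.
-/

open MeasureTheory Real Finset Complex
open scoped Matrix

noncomputable section

theorem hasDerivAt_sum_pow_div_factorial_smul {E : Type*} [NormedAddCommGroup E]
    [NormedSpace ℝ E] (n : ℕ) (c : ℕ → E) (a t : ℝ) :
    HasDerivAt (fun t => ∑ k ∈ range (n + 2), ((t - a) ^ k / k.factorial) • c k)
      (∑ k ∈ range (n + 1), ((t - a) ^ k / k.factorial) • c (k + 1)) t := by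
  have hterm : ∀ k : ℕ, HasDerivAt (fun t => ((t - a) ^ (k + 1) / (k + 1).factorial) • c (k + 1))
      (((t - a) ^ k / k.factorial) • c (k + 1)) t := by
    intro k
    convert ((((hasDerivAt_id t).sub_const a).fun_pow (k + 1)).div_const
      ((k + 1).factorial : ℝ)).smul_const (c (k + 1)) using 2
    · rfl
    · rw [Nat.factorial_succ, Nat.add_sub_cancel, id_eq]; push_cast; field_simp
  simp_rw [Finset.sum_range_succ' _ (n + 1), pow_zero, Nat.factorial_zero, Nat.cast_one, div_one,
    one_smul]
  exact (HasDerivAt.fun_sum fun k _ => hterm k).add_const (c 0)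

theorem norm_sub_taylor_le_of_holder {E : Type*} [NormedAddCommGroup E] [NormedSpace ℝ E]
    {M α : ℝ} (hα : 0 ≤ α) {n : ℕ} {f : ℝ → E} (hf : ContDiff ℝ n f)
    (hH : ∀ x y, ‖iteratedDeriv n f x - iteratedDeriv n f y‖ ≤ M * |x - y| ^ α) (a b : ℝ) :
    ‖f b - ∑ k ∈ range (n + 1), ((b - a) ^ k / k.factorial) • iteratedDeriv k f a‖ ≤
      M * |b - a| ^ ((n : ℝ) + α) := by
  induction n generalizing f b with
  | zero => simpa using hH b a
  | succ n ih =>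
    have hdf : Differentiable ℝ f := hf.differentiable (by simp)
    have hf' : ContDiff ℝ n (deriv f) :=
      (contDiff_succ_iff_deriv.mp (by exact_mod_cast hf)).2.2
    have hH' : ∀ x y, ‖iteratedDeriv n (deriv f) x - iteratedDeriv n (deriv f) y‖ ≤
        M * |x - y| ^ α := by
      simpa only [← iteratedDeriv_succ'] using hH
    let T : ℕ → (ℝ → E) → ℝ → E := fun p g t =>
      ∑ k ∈ range (p + 1), ((t - a) ^ k / k.factorial) • iteratedDeriv k g a
    -- `f - T (n + 1) f` vanishes at `a`, and its derivative is the order-`n` remainder of `f'`.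
    have hT : ∀ t, HasDerivAt (T (n + 1) f) (T n (deriv f) t) t := fun t => by
      simpa only [T, iteratedDeriv_succ'] using
        hasDerivAt_sum_pow_div_factorial_smul n (fun k => iteratedDeriv k f a) a t
    have hM : 0 ≤ M := by simpa using (norm_nonneg _).trans (hH 1 0)
    have hrem : ∀ t ∈ Set.uIcc a b,
        ‖deriv f t - T n (deriv f) t‖ ≤ M * |b - a| ^ ((n : ℝ) + α) := by
      intro t ht
      refine (ih hf' hH' t).trans ?_
      exact mul_le_mul_of_nonneg_left (Real.rpow_le_rpow (abs_nonneg _)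
        (Set.abs_sub_left_of_mem_uIcc ht) (by positivity)) hM
    have hmvt := Convex.norm_image_sub_le_of_norm_hasDerivWithin_le
      (fun t _ => ((hdf t).hasDerivAt.sub (hT t)).hasDerivWithinAt) hrem (convex_uIcc a b)
      Set.left_mem_uIcc Set.right_mem_uIcc
    have hTa : T (n + 1) f a = f a := by
      simp [T, Finset.sum_range_succ']
    rw [Pi.sub_apply, Pi.sub_apply, hTa, sub_self, sub_zero, Real.norm_eq_abs, mul_assoc,
      ← Real.rpow_add_one' (abs_nonneg _) (by positivity)] at hmvt
    convert hmvt using 3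
    push_cast; ring

/-- Entry `(k, j)` is the `k`-th derivative at `0` of `u ↦ exp (-i j u)`. -/
def trigJetMatrix (n : ℕ) : Matrix (Fin (n + 1)) (Fin (n + 1)) ℂ :=
  (Matrix.vandermonde fun j : Fin (n + 1) => -I * (j : ℕ))ᵀ

theorem trigJetMatrix_det_ne_zero (n : ℕ) : (trigJetMatrix n).det ≠ 0 := by
  rw [trigJetMatrix, Matrix.det_transpose, Matrix.det_vandermonde_ne_zero_iff]
  intro i j h
  simpa [Fin.ext_iff] using h

def trigSum {n : ℕ} (c : Fin (n + 1) → ℂ) (u : ℝ) : ℂ := ∑ j, c j * cexp (-I * (j : ℕ) * u)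

theorem trigSum_sub_taylor_eq {n : ℕ} {c : Fin (n + 1) → ℂ} {d : ℕ → ℂ}
    (h : trigJetMatrix n *ᵥ c = fun k : Fin (n + 1) => d k) (u : ℝ) :
    trigSum c u - ∑ k ∈ range (n + 1), ((u ^ k / k.factorial : ℝ) : ℂ) * d k =
      ∑ j, c j * (cexp (-I * (j : ℕ) * u) -
        ∑ k ∈ range (n + 1), (-I * (j : ℕ) * u) ^ k / k.factorial) := by
  have hd : ∀ k : Fin (n + 1), d k = ∑ j : Fin (n + 1), (-I * (j : ℕ)) ^ (k : ℕ) * c j :=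
    fun k => by rw [← congrFun h k]; rfl
  simp only [trigSum, mul_sub, sum_sub_distrib, sub_right_inj]
  rw [← Fin.sum_univ_eq_sum_range (fun k => ((u ^ k / k.factorial : ℝ) : ℂ) * d k)]
  simp only [hd, Finset.mul_sum,
    ← Fin.sum_univ_eq_sum_range (fun k => (-I * _ * (u : ℂ)) ^ k / (k.factorial : ℂ))]
  rw [Finset.sum_comm]
  refine Finset.sum_congr rfl fun j _ => Finset.sum_congr rfl fun k _ => ?_
  push_cast
  ring

theorem norm_trigSum_sub_taylor_le {n : ℕ} {c : Fin (n + 1) → ℂ} {d : ℕ → ℂ}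
    (h : trigJetMatrix n *ᵥ c = fun k : Fin (n + 1) => d k) (u : ℝ) :
    ‖trigSum c u - ∑ k ∈ range (n + 1), ((u ^ k / k.factorial : ℝ) : ℂ) * d k‖ ≤
      (∑ j, ‖c j‖) * ((n * |u|) ^ (n + 1) * Real.exp (n * |u|)) := by
  rw [trigSum_sub_taylor_eq h, Finset.sum_mul]
  refine (norm_sum_le _ _).trans (Finset.sum_le_sum fun j _ => ?_)
  rw [norm_mul]
  gcongr
  refine (Complex.norm_exp_sub_sum_le_norm_mul_exp _ _).trans ?_
  have hj : ‖-I * ((j : ℕ) : ℂ) * u‖ ≤ n * |u| := by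
    simp only [norm_mul, norm_neg, Complex.norm_I, one_mul, Complex.norm_natCast,
      Complex.norm_real, Real.norm_eq_abs]
    gcongr
    exact_mod_cast Nat.lt_succ_iff.mp j.isLt
  gcongr

def trigJetConst (n : ℕ) : ℝ := ∑ j : Fin (n + 1), ∑ k : Fin (n + 1), ‖(trigJetMatrix n)⁻¹ j k‖

theorem trigJetConst_nonneg (n : ℕ) : 0 ≤ trigJetConst n := by
  unfold trigJetConst; positivity

theorem exists_trigJetMatrix_mulVec_eq (n : ℕ) (d : ℕ → ℂ) {C : ℝ}
    (hd : ∀ k ≤ n, ‖d k‖ ≤ C) :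
    ∃ c : Fin (n + 1) → ℂ, trigJetMatrix n *ᵥ c = (fun k : Fin (n + 1) => d k) ∧
      ∑ j, ‖c j‖ ≤ trigJetConst n * C := by
  set A := (trigJetMatrix n)⁻¹
  refine ⟨A *ᵥ fun k => d k, ?_, ?_⟩
  · rw [Matrix.mulVec_mulVec, Matrix.mul_nonsing_inv _ (isUnit_iff_ne_zero.mpr
      (trigJetMatrix_det_ne_zero n)), Matrix.one_mulVec]
  · rw [trigJetConst, Finset.sum_mul]
    refine Finset.sum_le_sum fun j _ => ?_
    rw [Finset.sum_mul]
    change ‖∑ k, A j k * d k‖ ≤ _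
    refine (norm_sum_le _ _).trans (Finset.sum_le_sum fun k _ => ?_)
    rw [norm_mul]
    exact mul_le_mul_of_nonneg_left (hd k (Nat.lt_succ_iff.mp k.isLt)) (norm_nonneg _)

theorem pow_succ_le_mul_rpow {t R α : ℝ} (n : ℕ) (ht : 0 ≤ t) (htR : t ≤ R) (hR : 1 ≤ R)
    (hα0 : 0 ≤ α) (hα1 : α ≤ 1) : t ^ (n + 1) ≤ R * t ^ ((n : ℝ) + α) := by
  have hsplit : t ^ (n + 1) = t ^ ((n : ℝ) + α) * t ^ (1 - α) := by
    rw [← Real.rpow_add' ht (by ring_nf; positivity), ← Real.rpow_natCast]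
    push_cast; ring_nf
  calc t ^ (n + 1) = t ^ ((n : ℝ) + α) * t ^ (1 - α) := hsplit
    _ ≤ t ^ ((n : ℝ) + α) * R ^ (1 : ℝ) := by
      gcongr
      exact (Real.rpow_le_rpow ht htR (by linarith)).trans
        (Real.rpow_le_rpow_of_exponent_le hR (by linarith))
    _ = R * t ^ ((n : ℝ) + α) := by rw [Real.rpow_one, mul_comm]

def trigApproxConst (n : ℕ) : ℝ := 1 + trigJetConst n * (1 + π * n ^ (n + 1) * Real.exp (n * π))

theorem trigJetConst_le_trigApproxConst (n : ℕ) : trigJetConst n ≤ trigApproxConst n := by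
  have := trigJetConst_nonneg n
  have : 0 ≤ trigJetConst n * (π * n ^ (n + 1) * Real.exp (n * π)) := by positivity
  unfold trigApproxConst
  linarith

theorem one_le_trigApproxConst (n : ℕ) : 1 ≤ trigApproxConst n := by
  have := trigJetConst_nonneg n
  unfold trigApproxConst
  have : 0 ≤ trigJetConst n * (1 + π * n ^ (n + 1) * Real.exp (n * π)) := by positivity
  linarith

theorem exists_trigSum_approx {n : ℕ} {α Cφ : ℝ} (hα0 : 0 ≤ α) (hα1 : α ≤ 1) {φ : ℝ → ℂ}
    (hφ : ContDiff ℝ n φ) (hbd : ∀ j ≤ n, ∀ θ, ‖iteratedDeriv j φ θ‖ ≤ Cφ)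
    (hH : ∀ x y, ‖iteratedDeriv n φ x - iteratedDeriv n φ y‖ ≤ Cφ * |x - y| ^ α) (x : ℝ) :
    ∃ c : Fin (n + 1) → ℂ, ∑ j, c j = φ x ∧ ∑ j, ‖c j‖ ≤ trigApproxConst n * Cφ ∧
      ∀ u, |u| ≤ π →
        ‖φ (x + u) - trigSum c u‖ ≤ trigApproxConst n * Cφ * |u| ^ ((n : ℝ) + α) := by
  obtain ⟨c, hc, hcC⟩ := exists_trigJetMatrix_mulVec_eq n (fun k => iteratedDeriv k φ x)
    (fun k hk => hbd k hk x)
  have hCφ : 0 ≤ Cφ := (norm_nonneg _).trans (hbd 0 n.zero_le 0)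
  have hJ := trigJetConst_nonneg n
  refine ⟨c, ?_, hcC.trans (mul_le_mul_of_nonneg_right (trigJetConst_le_trigApproxConst n) hCφ),
    fun u hu => ?_⟩
  · simpa [trigJetMatrix, Matrix.mulVec, dotProduct] using congrFun hc 0
  have htaylor := norm_sub_taylor_le_of_holder hα0 hφ hH x (x + u)
  simp only [add_sub_cancel_left, Complex.real_smul] at htaylor
  have htrig := norm_trigSum_sub_taylor_le (d := fun k => iteratedDeriv k φ x) hc u
  have hpow := pow_succ_le_mul_rpow n (abs_nonneg u) hu (by linarith [pi_gt_three]) hα0 hα1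
  set P := ∑ k ∈ range (n + 1), ((u ^ k / k.factorial : ℝ) : ℂ) * iteratedDeriv k φ x
  calc ‖φ (x + u) - trigSum c u‖ ≤ ‖φ (x + u) - P‖ + ‖trigSum c u - P‖ := by
        rw [norm_sub_rev (trigSum c u)]
        exact norm_sub_le_norm_sub_add_norm_sub _ _ _
    _ ≤ Cφ * |u| ^ ((n : ℝ) + α) +
        trigJetConst n * Cφ * ((n * |u|) ^ (n + 1) * Real.exp (n * π)) :=
      add_le_add htaylor (htrig.trans (by gcongr))
    _ ≤ trigApproxConst n * Cφ * |u| ^ ((n : ℝ) + α) := by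
      rw [mul_pow, trigApproxConst]
      have := mul_le_mul_of_nonneg_left hpow
        (by positivity : 0 ≤ trigJetConst n * Cφ * (n ^ (n + 1) * Real.exp (n * π)))
      nlinarith [mul_nonneg (mul_nonneg hJ hCφ) (Real.rpow_nonneg (abs_nonneg u) ((n : ℝ) + α))]

theorem integral_comp_neg_mul_cexp (K : ℝ → ℂ) (j : ℕ) :
    ∫ θ in (-π)..π, K (-θ) * cexp (I * j * θ) = ∫ u in (-π)..π, cexp (-I * j * u) * K u := by
  have h := intervalIntegral.integral_comp_neg (a := -π) (b := π)
    (fun u : ℝ => cexp (-I * j * u) * K u)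
  rw [neg_neg] at h
  rw [← h]
  refine intervalIntegral.integral_congr fun θ _ => ?_
  simp only [ofReal_neg]
  ring_nf

theorem norm_integral_sum_sub_trigSum_mul_le {n : ℕ} {K : ℝ → ℂ} (hK : Continuous K)
    (hnorm : ∫ u in (-π)..π, K u = 1) {B : ℝ}
    (hflat : ∀ j ≤ n, ‖(∫ u in (-π)..π, cexp (-I * j * u) * K u) - 1‖ ≤ B)
    (c : Fin (n + 1) → ℂ) :
    ‖∫ u in (-π)..π, (∑ j, c j - trigSum c u) * K u‖ ≤ (∑ j, ‖c j‖) * B := by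
  have hexpand : ∀ u : ℝ, (∑ j, c j - trigSum c u) * K u =
      ∑ j, -c j * (cexp (-I * (j : ℕ) * u) * K u - K u) := fun u => by
    simp only [trigSum, ← Finset.sum_sub_distrib, Finset.sum_mul]
    exact Finset.sum_congr rfl fun j _ => by ring
  have hint : ∀ j : ℕ, IntervalIntegrable (fun u : ℝ => cexp (-I * j * u) * K u) volume (-π) π :=
    fun j => (by fun_prop : Continuous _).intervalIntegrable _ _
  simp_rw [hexpand]
  rw [intervalIntegral.integral_finsetSum fun (j : Fin (n + 1)) _ =>
    ((hint j).sub (hK.intervalIntegrable _ _)).const_mul _, Finset.sum_mul]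
  refine (norm_sum_le _ _).trans (Finset.sum_le_sum fun j _ => ?_)
  rw [intervalIntegral.integral_const_mul, intervalIntegral.integral_sub (hint j)
    (hK.intervalIntegrable _ _), hnorm, norm_mul, norm_neg]
  exact mul_le_mul_of_nonneg_left (hflat j (Nat.lt_succ_iff.mp j.isLt)) (norm_nonneg _)

theorem intervalIntegral_mul_comp_sub_eq {f K : ℝ → ℂ} (hf : Function.Periodic f (2 * π))
    (hK : Function.Periodic K (2 * π)) (x : ℝ) :
    ∫ θ in (-π)..π, f θ * K (θ - x) = ∫ u in (-π)..π, f (x + u) * K u := by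
  have hg : Function.Periodic (fun u => f (x + u) * K u) (2 * π) := fun u => by
    simp only [← add_assoc, hf (x + u), hK u]
  calc ∫ θ in (-π)..π, f θ * K (θ - x)
      = ∫ θ in (-π - x) + x..(-π - x + 2 * π) + x, f θ * K (θ - x) := by ring_nf
    _ = ∫ u in (-π - x)..(-π - x) + 2 * π, f (x + u) * K u := by
        rw [← intervalIntegral.integral_comp_add_right]
        simp only [add_comm _ x, add_sub_cancel_left]
    _ = ∫ u in (-π)..π, f (x + u) * K u := by
        rw [hg.intervalIntegral_add_eq (-π - x) (-π)]
        ring_nf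

theorem sub_intervalIntegral_mul_comp_sub_eq {φ K T : ℝ → ℂ} (hφ : Continuous φ)
    (hK : Continuous K) (hT : Continuous T) (hφper : Function.Periodic φ (2 * π))
    (hKper : Function.Periodic K (2 * π)) (hKnorm : ∫ θ in (-π)..π, K θ = 1) (x : ℝ) :
    φ x - ∫ θ in (-π)..π, φ θ * K (θ - x) =
      (∫ u in (-π)..π, (T u - φ (x + u)) * K u) + ∫ u in (-π)..π, (φ x - T u) * K u := by
  have hi₁ : IntervalIntegrable (fun u => (T u - φ (x + u)) * K u) volume (-π) π :=
    Continuous.intervalIntegrable (by fun_prop) _ _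
  have hi₂ : IntervalIntegrable (fun u => (φ x - T u) * K u) volume (-π) π :=
    Continuous.intervalIntegrable (by fun_prop) _ _
  have hi₃ : IntervalIntegrable (fun u => φ (x + u) * K u) volume (-π) π :=
    Continuous.intervalIntegrable (by fun_prop) _ _
  calc φ x - ∫ θ in (-π)..π, φ θ * K (θ - x)
      = φ x * (∫ u in (-π)..π, K u) - ∫ u in (-π)..π, φ (x + u) * K u := by
        rw [hKnorm, mul_one, intervalIntegral_mul_comp_sub_eq hφper hKper x]
    _ = ∫ u in (-π)..π, (φ x * K u - φ (x + u) * K u) := by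
        rw [intervalIntegral.integral_sub ((hK.intervalIntegrable _ _).const_mul _) hi₃,
          intervalIntegral.integral_const_mul]
    _ = ∫ u in (-π)..π, ((T u - φ (x + u)) * K u + (φ x - T u) * K u) :=
        intervalIntegral.integral_congr fun u _ => by ring
    _ = _ := intervalIntegral.integral_add hi₁ hi₂

theorem integral_add_rpow_neg_le {ε δ a : ℝ} (hε : 0 < ε) (hδ : 0 < δ) (ha : 0 ≤ a) :
    ∫ u in (0)..a, (ε + u) ^ (-(1 + δ)) ≤ ε ^ (-δ) / δ := by
  rw [intervalIntegral.integral_comp_add_left (fun u => u ^ (-(1 + δ))) ε, add_zero,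
    integral_rpow (Or.inr ⟨by linarith, fun h => by
      rw [Set.uIcc_of_le (by linarith)] at h; linarith [h.1]⟩)]
  have h1 : -(1 + δ) + 1 = -δ := by ring
  rw [h1, div_neg, ← neg_div, neg_sub]
  gcongr
  exact sub_le_self _ (Real.rpow_nonneg (by linarith) _)

theorem integral_add_abs_rpow_neg_le {ε δ a : ℝ} (hε : 0 < ε) (hδ : 0 < δ) (ha : 0 ≤ a) :
    ∫ u in (-a)..a, (ε + |u|) ^ (-(1 + δ)) ≤ 2 * ε ^ (-δ) / δ := by
  have hcont : Continuous fun u : ℝ => (ε + |u|) ^ (-(1 + δ)) :=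
    (continuous_const.add continuous_abs).rpow_const fun u =>
      Or.inl (by positivity : 0 < ε + |u|).ne'
  have hright : ∫ u in (0)..a, (ε + |u|) ^ (-(1 + δ)) = ∫ u in (0)..a, (ε + u) ^ (-(1 + δ)) :=
    intervalIntegral.integral_congr fun u hu => by
      rw [Set.uIcc_of_le ha] at hu
      simp only [abs_of_nonneg hu.1]
  have hleft :
      ∫ u in (-a)..0, (ε + |u|) ^ (-(1 + δ)) = ∫ u in (0)..a, (ε + |u|) ^ (-(1 + δ)) := by
    simpa using (intervalIntegral.integral_comp_neg (a := 0) (b := a)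
      (fun u : ℝ => (ε + |u|) ^ (-(1 + δ)))).symm
  rw [← intervalIntegral.integral_add_adjacent_intervals (b := 0) (hcont.intervalIntegrable _ _)
    (hcont.intervalIntegrable _ _), hleft, hright]
  have := integral_add_rpow_neg_le hε hδ ha
  rw [mul_div_assoc]; linarith

theorem log_one_add_inv_le {ε δ : ℝ} (hε : 0 < ε) (hε1 : ε ≤ 1) (hδ : 0 < δ) :
    Real.log (1 + ε⁻¹) ≤ 2 ^ δ / δ * ε ^ (-δ) := by
  have h2 : 1 + ε⁻¹ ≤ 2 * ε⁻¹ := by linarith [one_le_inv_iff₀.mpr ⟨hε, hε1⟩]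
  calc Real.log (1 + ε⁻¹) ≤ (1 + ε⁻¹) ^ δ / δ := Real.log_le_rpow_div (by positivity) hδ
    _ ≤ (2 * ε⁻¹) ^ δ / δ := by gcongr
    _ = 2 ^ δ / δ * ε ^ (-δ) := by
      rw [Real.mul_rpow (by norm_num) (by positivity), Real.inv_rpow hε.le, Real.rpow_neg hε.le]
      ring

theorem rpow_div_add_pow_succ_le {ε t s : ℝ} (m : ℕ) (hε : 0 < ε) (ht : 0 ≤ t) (hs : 0 ≤ s) :
    t ^ s / (ε + t) ^ (m + 1) ≤ (ε + t) ^ (-(1 + (m - s))) := by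
  have hεt : 0 < ε + t := by positivity
  calc t ^ s / (ε + t) ^ (m + 1) ≤ (ε + t) ^ s / (ε + t) ^ (m + 1) := by
        gcongr; linarith
    _ = (ε + t) ^ (-(1 + (m - s))) := by
        rw [← Real.rpow_natCast, ← Real.rpow_sub hεt]
        push_cast; ring_nf

theorem rpow_natCast_mul_rpow_neg_sub {ε s : ℝ} (m : ℕ) (hε : 0 < ε) :
    ε ^ m * ε ^ (-(m - s)) = ε ^ s := by
  rw [← Real.rpow_natCast, ← Real.rpow_add hε]
  ring_nf

theorem norm_integral_mul_le_of_concentration {g K : ℝ → ℂ} (hg : Continuous g)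
    (hK : Continuous K) {m : ℕ} {A C_K ε s : ℝ} (hε : 0 < ε) (hs : 0 ≤ s) (hsm : s < m)
    (hA : 0 ≤ A) (hCK : 0 ≤ C_K) (hgA : ∀ u, |u| ≤ π → ‖g u‖ ≤ A * |u| ^ s)
    (hKc : ∀ θ ∈ Set.Icc (-π) π, ‖K θ‖ ≤ C_K * ε ^ m / (ε + |θ|) ^ (m + 1)) :
    ‖∫ u in (-π)..π, g u * K u‖ ≤ 2 * A * C_K / (m - s) * ε ^ s := by
  have hπ : -π ≤ π := by linarith [pi_pos]
  have hδ : 0 < (m : ℝ) - s := by linarith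
  have hpt : ∀ u ∈ Set.Icc (-π) π,
      ‖g u * K u‖ ≤ A * C_K * ε ^ m * (ε + |u|) ^ (-(1 + (m - s))) := fun u hu => by
    have hg' := hgA u (abs_le.mpr hu)
    calc ‖g u * K u‖ ≤ A * |u| ^ s * (C_K * ε ^ m / (ε + |u|) ^ (m + 1)) := by
          rw [norm_mul]; gcongr; exact hKc u hu
      _ = A * C_K * ε ^ m * (|u| ^ s / (ε + |u|) ^ (m + 1)) := by ring
      _ ≤ A * C_K * ε ^ m * (ε + |u|) ^ (-(1 + (m - s))) := by
          gcongr; exact rpow_div_add_pow_succ_le m hε (abs_nonneg u) hs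
  have hcont : Continuous fun u : ℝ => (ε + |u|) ^ (-(1 + ((m : ℝ) - s))) :=
    (continuous_const.add continuous_abs).rpow_const fun u =>
      Or.inl (by positivity : 0 < ε + |u|).ne'
  calc ‖∫ u in (-π)..π, g u * K u‖ ≤ ∫ u in (-π)..π, ‖g u * K u‖ :=
        intervalIntegral.norm_integral_le_integral_norm hπ
    _ ≤ ∫ u in (-π)..π, A * C_K * ε ^ m * (ε + |u|) ^ (-(1 + (m - s))) :=
        intervalIntegral.integral_mono_on hπ ((hg.mul hK).norm.intervalIntegrable _ _)
          ((hcont.const_mul _).intervalIntegrable _ _) hpt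
    _ = A * C_K * ε ^ m * ∫ u in (-π)..π, (ε + |u|) ^ (-(1 + (m - s))) :=
        intervalIntegral.integral_const_mul _ _
    _ ≤ A * C_K * ε ^ m * (2 * ε ^ (-(m - s)) / (m - s)) := by
        gcongr; exact integral_add_abs_rpow_neg_le hε hδ pi_pos.le
    _ = 2 * A * C_K / (m - s) * ε ^ s := by
        rw [← rpow_natCast_mul_rpow_neg_sub (s := s) m hε]; ring

theorem continuous_trigSum {n : ℕ} (c : Fin (n + 1) → ℂ) : Continuous (trigSum c) := by
  unfold trigSum; fun_prop

theorem norm_sub_intervalIntegral_mul_comp_sub_le {m n : ℕ} {α C_K ε Cφ : ℝ} (hα0 : 0 ≤ α)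
    (hα1 : α ≤ 1) (hnα : (n : ℝ) + α < m) (hCK : 0 ≤ C_K) (hε0 : 0 < ε) (hε1 : ε ≤ 1)
    {K : ℝ → ℂ} (hK : Continuous K) (hKper : Function.Periodic K (2 * π))
    (hKnorm : ∫ θ in (-π)..π, K θ = 1)
    (hKflat : ∀ j : ℕ, 1 ≤ j → j ≤ m - 1 →
      ‖(∫ θ in (-π)..π, K (-θ) * cexp (I * j * θ)) - 1‖ ≤ C_K * ε ^ m * Real.log (1 + ε⁻¹))
    (hKconc : ∀ θ ∈ Set.Icc (-π) π, ‖K θ‖ ≤ C_K * ε ^ m / (ε + |θ|) ^ (m + 1))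
    {φ : ℝ → ℂ} (hφ : ContDiff ℝ n φ) (hφper : Function.Periodic φ (2 * π))
    (hφbd : ∀ j ≤ n, ∀ θ, ‖iteratedDeriv j φ θ‖ ≤ Cφ)
    (hφH : ∀ x y, ‖iteratedDeriv n φ x - iteratedDeriv n φ y‖ ≤ Cφ * |x - y| ^ α) (x : ℝ) :
    ‖φ x - ∫ θ in (-π)..π, φ θ * K (θ - x)‖ ≤
      trigApproxConst n * C_K * (2 + 2 ^ ((m : ℝ) - (n + α))) / ((m : ℝ) - (n + α)) * Cφ *
        ε ^ ((n : ℝ) + α) := by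
  set δ : ℝ := m - (n + α)
  have hδ : 0 < δ := by linarith
  have hnm : n ≤ m - 1 := Nat.le_sub_one_of_lt (by exact_mod_cast (by linarith : (n : ℝ) < m))
  obtain ⟨c, hc0, hcA, happrox⟩ := exists_trigSum_approx hα0 hα1 hφ hφbd hφH x
  have hCφ : 0 ≤ Cφ := (norm_nonneg _).trans (hφbd 0 n.zero_le 0)
  have hA : 0 ≤ trigApproxConst n * Cφ :=
    mul_nonneg (zero_le_one.trans (one_le_trigApproxConst n)) hCφ
  have hlog := log_one_add_inv_le hε0 hε1 hδ
  have hB : 0 ≤ C_K * ε ^ m * Real.log (1 + ε⁻¹) :=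
    mul_nonneg (by positivity) (Real.log_nonneg (by linarith [one_le_inv_iff₀.mpr ⟨hε0, hε1⟩]))
  have hflat : ∀ j ≤ n,
      ‖(∫ u in (-π)..π, cexp (-I * j * u) * K u) - 1‖ ≤ C_K * ε ^ m * Real.log (1 + ε⁻¹) := by
    intro j hj
    rcases j.eq_zero_or_pos with rfl | hj0
    · simpa [hKnorm] using hB
    · rw [← integral_comp_neg_mul_cexp]
      exact hKflat j hj0 (hj.trans hnm)
  have hgc : Continuous fun u => trigSum c u - φ (x + u) :=
    (continuous_trigSum c).sub (hφ.continuous.comp (continuous_const_add x))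
  have hfirst := norm_integral_mul_le_of_concentration hgc hK hε0
    (by positivity) hnα hA hCK (fun u hu => by rw [norm_sub_rev]; exact happrox u hu) hKconc
  have hsecond := norm_integral_sum_sub_trigSum_mul_le hK hKnorm hflat c
  have hεpow : ε ^ m * ε ^ (-δ) = ε ^ ((n : ℝ) + α) := rpow_natCast_mul_rpow_neg_sub m hε0
  rw [sub_intervalIntegral_mul_comp_sub_eq hφ.continuous hK (continuous_trigSum c) hφper hKper
    hKnorm x, ← hc0]
  calc _ ≤ ‖∫ u in (-π)..π, (trigSum c u - φ (x + u)) * K u‖ +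
        ‖∫ u in (-π)..π, (∑ j, c j - trigSum c u) * K u‖ := norm_add_le _ _
    _ ≤ 2 * (trigApproxConst n * Cφ) * C_K / δ * ε ^ ((n : ℝ) + α) +
        trigApproxConst n * Cφ * (C_K * ε ^ m * (2 ^ δ / δ * ε ^ (-δ))) :=
      add_le_add hfirst (hsecond.trans (by gcongr))
    _ = trigApproxConst n * C_K * (2 + 2 ^ δ) / δ * Cφ * ε ^ ((n : ℝ) + α) := by
      rw [← hεpow]; ring

theorem integral_sub_intervalIntegral_mul_integral_eq {ξ : Measure ℝ} [IsFiniteMeasure ξ]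
    {φ K : ℝ → ℂ} (hφ : Continuous φ) (hK : Continuous K) {Mφ MK : ℝ}
    (hφb : ∀ θ, ‖φ θ‖ ≤ Mφ) (hKb : ∀ θ, ‖K θ‖ ≤ MK) {a b : ℝ} (hab : a ≤ b) :
    (∫ x, φ x ∂ξ) - ∫ θ in a..b, φ θ * ∫ x, K (θ - x) ∂ξ =
      ∫ x, (φ x - ∫ θ in a..b, φ θ * K (θ - x)) ∂ξ := by
  set μ := volume.restrict (Set.Ioc a b)
  have : IsFiniteMeasure μ := isFiniteMeasure_restrict.mpr measure_Ioc_lt_top.ne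
  have hF : Integrable (fun p : ℝ × ℝ => φ p.1 * K (p.1 - p.2)) (μ.prod ξ) := by
    refine Integrable.mono' (integrable_const (Mφ * MK)) (by fun_prop) (ae_of_all _ fun p => ?_)
    rw [norm_mul]
    exact mul_le_mul (hφb _) (hKb _) (norm_nonneg _) ((norm_nonneg _).trans (hφb 0))
  have hφi : Integrable φ ξ :=
    Integrable.mono' (integrable_const Mφ) hφ.aestronglyMeasurable (ae_of_all _ hφb)
  simp only [intervalIntegral.integral_of_le hab, ← integral_const_mul]
  rw [integral_integral_swap hF, integral_sub hφi hF.integral_prod_right]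

end

/-- Convergence to the functional calculus / weak convergence of smoothed spectral
measures: for an `m`-th order periodic kernel `{K_ε^𝕋}` with constant `C_K`, there is a
constant `C` (depending only on `C_K`, `m`, `n`, `α`) such that for every scalar
spectral measure `ξ_g` (a probability measure supported on `[-π,π]`) and every
`2π`-periodic `φ ∈ C^{n,α}` with `n + α < m` (with `C^{n,α}`-norm bounded by `Cφ`),
`|∫ φ dξ_g - ∫ φ(θ)[K_ε^𝕋 ∗ ξ_g](θ) dθ| ≤ C·Cφ·ε^{n+α}` for all `0 < ε ≤ 1`. -/
theorem weak_convergence_rate (m n : ℕ) (α : ℝ) (hα0 : 0 ≤ α) (hα1 : α ≤ 1)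
    (hnα : (n : ℝ) + α < m) (C_K : ℝ) (hCK : 0 < C_K) :
    ∃ C : ℝ, 0 < C ∧
      ∀ Kk : ℝ → ℝ → ℂ,
        (∀ ε ∈ Set.Ioc (0 : ℝ) 1, Continuous (Kk ε)) →
        (∀ ε ∈ Set.Ioc (0 : ℝ) 1, ∀ θ : ℝ, Kk ε (θ + 2 * π) = Kk ε θ) →
        (∀ ε ∈ Set.Ioc (0 : ℝ) 1, (∫ θ in (-π)..π, Kk ε θ) = 1) →
        (∀ ε ∈ Set.Ioc (0 : ℝ) 1, ∀ j : ℕ, 1 ≤ j → j ≤ m - 1 →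
          ‖(∫ θ in (-π)..π, Kk ε (-θ) * Complex.exp (Complex.I * (j : ℂ) * (θ : ℂ))) - 1‖
            ≤ C_K * ε ^ m * Real.log (1 + ε⁻¹)) →
        (∀ ε ∈ Set.Ioc (0 : ℝ) 1, ∀ θ ∈ Set.Icc (-π) π,
          ‖Kk ε θ‖ ≤ C_K * ε ^ m / (ε + |θ|) ^ (m + 1)) →
        ∀ ξ : Measure ℝ, IsProbabilityMeasure ξ → ξ (Set.Icc (-π) π)ᶜ = 0 →
        ∀ (φ : ℝ → ℂ) (Cφ : ℝ),
          ContDiff ℝ n φ →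
          (∀ θ : ℝ, φ (θ + 2 * π) = φ θ) →
          (∀ j : ℕ, j ≤ n → ∀ θ : ℝ, ‖iteratedDeriv j φ θ‖ ≤ Cφ) →
          (∀ x y : ℝ, ‖iteratedDeriv n φ x - iteratedDeriv n φ y‖ ≤ Cφ * |x - y| ^ α) →
          ∀ ε ∈ Set.Ioc (0 : ℝ) 1,
            ‖(∫ θ, φ θ ∂ξ) -
                ∫ θ in (-π)..π, φ θ * ∫ φ', Kk ε (θ - φ') ∂ξ‖ ≤
              C * Cφ * ε ^ ((n : ℝ) + α) := by
  have hδ : 0 < (m : ℝ) - (n + α) := by linarith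
  refine ⟨trigApproxConst n * C_K * (2 + 2 ^ ((m : ℝ) - (n + α))) / ((m : ℝ) - (n + α)),
    by have := one_le_trigApproxConst n; positivity, ?_⟩
  intro Kk hKc hKper hKnorm hKflat hKconc ξ hξ _ φ Cφ hφ hφper hφbd hφH ε hε
  obtain ⟨MK, hMK⟩ := isBounded_iff_forall_norm_le.mp
    (Function.Periodic.isBounded_of_continuous (hKper ε hε) (by positivity) (hKc ε hε))
  rw [integral_sub_intervalIntegral_mul_integral_eq hφ.continuous (hKc ε hε) (hφbd 0 n.zero_le)
    (fun θ => hMK _ (Set.mem_range_self θ)) (by linarith [pi_pos])]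
  refine (norm_integral_le_of_norm_le_const (ae_of_all _ fun x =>
    norm_sub_intervalIntegral_mul_comp_sub_le hα0 hα1 hnα hCK.le hε.1 hε.2 (hKc ε hε) (hKper ε hε)
      (hKnorm ε hε) (hKflat ε hε) (hKconc ε hε) hφ hφper hφbd hφH x)).trans_eq ?_
  simp
end
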